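/- arXiv:1510.01076 — 3 statements merged into one kernel-verified Lean document; each statement's English description precedes it below -/
import Mathlib

section
/- Let n ≥ 2 be an even integer. Then there exists a ℂ-linear automorphism g of ℂ^n × ℂ^n with det g = 1 and b(g(x), g(y)) = b(x,y) for all x, y, such that the four subspaces C₀, C₁, g(C₀), g(C₁) pairwise intersect in {0}. -/
/-- The symmetric bilinear form on `ℂ^n × ℂ^n` with Gram matrix `[[0,Iₙ],[Iₙ,0]]`:
`b((z,w),(z',w')) = ∑ᵢ (zᵢ w'ᵢ + wᵢ z'ᵢ)`. -/
noncomputable def hypForm (n : ℕ) (x y : (Fin n → ℂ) × (Fin n → ℂ)) : ℂ :=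
  ∑ i, (x.1 i * y.2 i + x.2 i * y.1 i)

/-- The maximal isotropic subspace `C₀ = ℂ^n × {0}`. -/
noncomputable def hypC₀ (n : ℕ) : Submodule ℂ ((Fin n → ℂ) × (Fin n → ℂ)) :=
  LinearMap.range (LinearMap.inl ℂ (Fin n → ℂ) (Fin n → ℂ))

/-- The maximal isotropic subspace `C₁ = {0} × ℂ^n`. -/
noncomputable def hypC₁ (n : ℕ) : Submodule ℂ ((Fin n → ℂ) × (Fin n → ℂ)) :=
  LinearMap.range (LinearMap.inr ℂ (Fin n → ℂ) (Fin n → ℂ))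


section Aux

variable {n m : ℕ} (e : Fin n ≃ Fin m ⊕ Fin m)

/-- A complex structure on `ℂ^n` (for `n = m + m`), skew-symmetric for the dot product. -/
noncomputable def Tmap : (Fin n → ℂ) →ₗ[ℂ] (Fin n → ℂ) where
  toFun z := fun j =>
    Sum.elim (fun a => - z (e.symm (Sum.inr a))) (fun a => z (e.symm (Sum.inl a))) (e j)
  map_add' z z' := by funext j; cases h : e j <;> simp [h, add_comm]
  map_smul' c z := by funext j; cases h : e j <;> simp [h, smul_eq_mul, mul_neg]

lemma Tmap_inl (z : Fin n → ℂ) (a : Fin m) :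
    Tmap e z (e.symm (Sum.inl a)) = - z (e.symm (Sum.inr a)) := by
  simp [Tmap]

lemma Tmap_inr (z : Fin n → ℂ) (a : Fin m) :
    Tmap e z (e.symm (Sum.inr a)) = z (e.symm (Sum.inl a)) := by
  simp [Tmap]

lemma Tmap_Tmap (z : Fin n → ℂ) : Tmap e (Tmap e z) = -z := by
  funext j
  have hj : j = e.symm (e j) := (e.symm_apply_apply j).symm
  rcases h : e j with a | a
  · rw [hj, h, Tmap_inl, Tmap_inr]; simp
  · rw [hj, h, Tmap_inr, Tmap_inl]; simp

lemma Tmap_inj {z : Fin n → ℂ} (h : Tmap e z = 0) : z = 0 := by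
  have := Tmap_Tmap e z
  rw [h, map_zero] at this
  simpa using this.symm

/-- complex dot product -/
noncomputable def dotc (u v : Fin n → ℂ) : ℂ := ∑ i, u i * v i

lemma sum_split (F : Fin n → ℂ) :
    ∑ j, F j = ∑ a, F (e.symm (Sum.inl a)) + ∑ a, F (e.symm (Sum.inr a)) := by
  rw [← Equiv.sum_comp e.symm F, Fintype.sum_sum_type]

lemma dot_T_T (u v : Fin n → ℂ) : dotc (Tmap e u) (Tmap e v) = dotc u v := by
  unfold dotc
  rw [sum_split e, sum_split e (fun i => u i * v i)]
  simp only [Tmap_inl, Tmap_inr, neg_mul_neg]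
  exact add_comm _ _

lemma dot_T_skew (u v : Fin n → ℂ) : dotc (Tmap e u) v + dotc u (Tmap e v) = 0 := by
  unfold dotc
  rw [sum_split e (fun i => Tmap e u i * v i), sum_split e (fun i => u i * Tmap e v i)]
  simp only [Tmap_inl, Tmap_inr, neg_mul, mul_neg, Finset.sum_neg_distrib]
  ring

lemma dotc_add_left (u v w : Fin n → ℂ) : dotc (u + v) w = dotc u w + dotc v w := by
  simp [dotc, add_mul, Finset.sum_add_distrib]

lemma dotc_add_right (u v w : Fin n → ℂ) : dotc u (v + w) = dotc u v + dotc u w := by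
  simp [dotc, mul_add, Finset.sum_add_distrib]

lemma dotc_sub_left (u v w : Fin n → ℂ) : dotc (u - v) w = dotc u w - dotc v w := by
  simp [dotc, sub_mul, Finset.sum_sub_distrib]

lemma dotc_sub_right (u v w : Fin n → ℂ) : dotc u (v - w) = dotc u v - dotc u w := by
  simp [dotc, mul_sub, Finset.sum_sub_distrib]

lemma dotc_smul_left (c : ℂ) (u v : Fin n → ℂ) : dotc (c • u) v = c * dotc u v := by
  simp [dotc, Finset.mul_sum, smul_eq_mul, mul_assoc]

lemma dotc_smul_right (c : ℂ) (u v : Fin n → ℂ) : dotc u (c • v) = c * dotc u v := by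
  simp [dotc, Finset.mul_sum, smul_eq_mul]
  ring_nf
  simp [mul_comm, mul_left_comm]

lemma hypForm_eq (x y : (Fin n → ℂ) × (Fin n → ℂ)) :
    hypForm n x y = dotc x.1 y.2 + dotc x.2 y.1 := by
  simp [hypForm, dotc, Finset.sum_add_distrib]

/-- upper-triangular shear -/
noncomputable def Umap (c : ℂ) :
    ((Fin n → ℂ) × (Fin n → ℂ)) →ₗ[ℂ] ((Fin n → ℂ) × (Fin n → ℂ)) :=
  LinearMap.prod (LinearMap.fst ℂ _ _ + c • (Tmap e ∘ₗ LinearMap.snd ℂ _ _))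
    (LinearMap.snd ℂ _ _)

/-- lower-triangular shear -/
noncomputable def Lmap (c : ℂ) :
    ((Fin n → ℂ) × (Fin n → ℂ)) →ₗ[ℂ] ((Fin n → ℂ) × (Fin n → ℂ)) :=
  LinearMap.prod (LinearMap.fst ℂ _ _)
    (c • (Tmap e ∘ₗ LinearMap.fst ℂ _ _) + LinearMap.snd ℂ _ _)

/-- sign flip on the first factor -/
noncomputable def Smap :
    ((Fin n → ℂ) × (Fin n → ℂ)) →ₗ[ℂ] ((Fin n → ℂ) × (Fin n → ℂ)) :=
  LinearMap.prod (-(LinearMap.fst ℂ _ _)) (LinearMap.snd ℂ _ _)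

lemma Umap_apply (c : ℂ) (x : (Fin n → ℂ) × (Fin n → ℂ)) :
    Umap e c x = (x.1 + c • Tmap e x.2, x.2) := rfl

lemma Lmap_apply (c : ℂ) (x : (Fin n → ℂ) × (Fin n → ℂ)) :
    Lmap e c x = (x.1, c • Tmap e x.1 + x.2) := rfl

lemma Smap_apply (x : (Fin n → ℂ) × (Fin n → ℂ)) :
    Smap (n := n) x = (-x.1, x.2) := rfl

lemma Umap_comp (c d : ℂ) : Umap e c ∘ₗ Umap e d = Umap e (c + d) := by
  apply LinearMap.ext; intro x
  simp only [LinearMap.comp_apply, Umap_apply]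
  exact Prod.ext (by module) rfl

lemma Lmap_comp (c d : ℂ) : Lmap e c ∘ₗ Lmap e d = Lmap e (c + d) := by
  apply LinearMap.ext; intro x
  simp only [LinearMap.comp_apply, Lmap_apply]
  exact Prod.ext rfl (by module)

lemma Umap_zero : Umap e 0 = LinearMap.id := by
  apply LinearMap.ext; intro x
  simp [Umap_apply]

lemma Lmap_zero : Lmap e 0 = LinearMap.id := by
  apply LinearMap.ext; intro x
  simp [Lmap_apply]

lemma Smap_Smap : (Smap (n := n)) ∘ₗ Smap = LinearMap.id := by
  apply LinearMap.ext; intro x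
  simp [Smap_apply]

lemma SUS (c : ℂ) : Smap ∘ₗ Umap e c ∘ₗ Smap = Umap e (-c) := by
  apply LinearMap.ext; intro x
  simp only [LinearMap.comp_apply, Umap_apply, Smap_apply]
  exact Prod.ext (by module) rfl

lemma SLS (c : ℂ) : Smap ∘ₗ Lmap e c ∘ₗ Smap = Lmap e (-c) := by
  apply LinearMap.ext; intro x
  simp only [LinearMap.comp_apply, Lmap_apply, Smap_apply]
  exact Prod.ext (by module) (by rw [map_neg]; module)

lemma detS_sq : LinearMap.det (Smap (n := n)) * LinearMap.det (Smap (n := n)) = 1 := by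
  rw [← LinearMap.det_comp, Smap_Smap, LinearMap.det_id]

lemma detU_sq (c : ℂ) :
    LinearMap.det (Umap e c) * LinearMap.det (Umap e c) = 1 := by
  have h1 : LinearMap.det (Umap e c) * LinearMap.det (Umap e (-c)) = 1 := by
    rw [← LinearMap.det_comp, Umap_comp, add_neg_cancel, Umap_zero, LinearMap.det_id]
  have h2 : LinearMap.det (Umap e (-c)) = LinearMap.det (Umap e c) := by
    rw [← SUS e c, LinearMap.det_comp, LinearMap.det_comp]
    calc LinearMap.det Smap * (LinearMap.det (Umap e c) * LinearMap.det Smap)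
        = LinearMap.det (Umap e c) * (LinearMap.det (Smap (n := n)) * LinearMap.det Smap) := by
          ring
      _ = LinearMap.det (Umap e c) := by rw [detS_sq, mul_one]
  nth_rewrite 2 [← h2]; exact h1

lemma detL_sq (c : ℂ) :
    LinearMap.det (Lmap e c) * LinearMap.det (Lmap e c) = 1 := by
  have h1 : LinearMap.det (Lmap e c) * LinearMap.det (Lmap e (-c)) = 1 := by
    rw [← LinearMap.det_comp, Lmap_comp, add_neg_cancel, Lmap_zero, LinearMap.det_id]
  have h2 : LinearMap.det (Lmap e (-c)) = LinearMap.det (Lmap e c) := by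
    rw [← SLS e c, LinearMap.det_comp, LinearMap.det_comp]
    calc LinearMap.det Smap * (LinearMap.det (Lmap e c) * LinearMap.det Smap)
        = LinearMap.det (Lmap e c) * (LinearMap.det (Smap (n := n)) * LinearMap.det Smap) := by
          ring
      _ = LinearMap.det (Lmap e c) := by rw [detS_sq, mul_one]
  nth_rewrite 2 [← h2]; exact h1

lemma detU_one (c : ℂ) : LinearMap.det (Umap e c) = 1 := by
  have : Umap e (c/2) ∘ₗ Umap e (c/2) = Umap e c := by
    rw [Umap_comp]; norm_num
  rw [← this, LinearMap.det_comp, detU_sq]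

lemma detL_one (c : ℂ) : LinearMap.det (Lmap e c) = 1 := by
  have : Lmap e (c/2) ∘ₗ Lmap e (c/2) = Lmap e c := by
    rw [Lmap_comp]; norm_num
  rw [← this, LinearMap.det_comp, detL_sq]

/-- the moving element -/
noncomputable def gmap :
    ((Fin n → ℂ) × (Fin n → ℂ)) →ₗ[ℂ] ((Fin n → ℂ) × (Fin n → ℂ)) :=
  Lmap e 1 ∘ₗ Umap e (-1)

lemma gmap_apply (x : (Fin n → ℂ) × (Fin n → ℂ)) :
    gmap e x = (x.1 - Tmap e x.2, Tmap e x.1 + (2:ℂ) • x.2) := by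
  simp only [gmap, LinearMap.comp_apply, Umap_apply, Lmap_apply]
  have h : Tmap e (x.1 + (-1:ℂ) • Tmap e x.2) = Tmap e x.1 + x.2 := by
    rw [map_add, map_smul, Tmap_Tmap]
    module
  refine Prod.ext (by module) ?_
  rw [h]
  module

lemma det_gmap : LinearMap.det (gmap e) = 1 := by
  rw [gmap, LinearMap.det_comp, detU_one, detL_one, mul_one]

lemma gmap_form (x y : (Fin n → ℂ) × (Fin n → ℂ)) :
    hypForm n (gmap e x) (gmap e y) = hypForm n x y := by
  obtain ⟨z, w⟩ := x
  obtain ⟨z', w'⟩ := y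
  rw [hypForm_eq, hypForm_eq, gmap_apply, gmap_apply]
  simp only [dotc_sub_left, dotc_sub_right, dotc_add_right, dotc_add_left, dotc_smul_left, dotc_smul_right]
  have hA := dot_T_T e w z'
  have hB := dot_T_T e z w'
  have hC := dot_T_skew e z z'
  have hD := dot_T_skew e w w'
  linear_combination hC - hA - hB - 2*hD

lemma mem_C0 {x : (Fin n → ℂ) × (Fin n → ℂ)} : x ∈ hypC₀ n ↔ x.2 = 0 := by
  constructor
  · rintro ⟨z, rfl⟩; rfl
  · intro h
    exact ⟨x.1, by ext <;> simp [h]⟩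

lemma mem_C1 {x : (Fin n → ℂ) × (Fin n → ℂ)} : x ∈ hypC₁ n ↔ x.1 = 0 := by
  constructor
  · rintro ⟨z, rfl⟩; rfl
  · intro h
    exact ⟨x.2, by ext <;> simp [h]⟩

end Aux

/-- Movability of the Schottky pair in `Q_{2n−2}` (Section 4.3): for even `n ≥ 2` there is a
linear automorphism `g` of `ℂ^n × ℂ^n` with `det g = 1` preserving `b`, such that the four
subspaces `C₀, C₁, g(C₀), g(C₁)` pairwise intersect in `{0}`. -/
theorem quadric_schottky_pair_movable (n : ℕ) (hn : 2 ≤ n) (heven : Even n) :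
    ∃ g : ((Fin n → ℂ) × (Fin n → ℂ)) →ₗ[ℂ] ((Fin n → ℂ) × (Fin n → ℂ)),
      LinearMap.det g = 1 ∧
      (∀ x y, hypForm n (g x) (g y) = hypForm n x y) ∧
      hypC₀ n ⊓ hypC₁ n = ⊥ ∧
      hypC₀ n ⊓ (hypC₀ n).map g = ⊥ ∧
      hypC₀ n ⊓ (hypC₁ n).map g = ⊥ ∧
      hypC₁ n ⊓ (hypC₀ n).map g = ⊥ ∧
      hypC₁ n ⊓ (hypC₁ n).map g = ⊥ ∧
      (hypC₀ n).map g ⊓ (hypC₁ n).map g = ⊥ := by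
  obtain ⟨m, hm⟩ := heven
  let e : Fin n ≃ Fin m ⊕ Fin m := (finCongr hm).trans finSumFinEquiv.symm
  refine ⟨gmap e, det_gmap e, gmap_form e, ?_, ?_, ?_, ?_, ?_, ?_⟩
  · -- C0 ⊓ C1
    rw [eq_bot_iff]
    intro x hx
    rw [Submodule.mem_inf, mem_C0, mem_C1] at hx
    rw [Submodule.mem_bot]
    exact Prod.ext hx.2 hx.1
  · -- C0 ⊓ g C0
    rw [eq_bot_iff]
    intro x hx
    rw [Submodule.mem_inf, Submodule.mem_map] at hx
    obtain ⟨h0, y, hy, rfl⟩ := hx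
    rw [mem_C0] at h0 hy
    rw [gmap_apply] at h0
    simp only [hy, smul_zero, add_zero] at h0
    have h1 : y.1 = 0 := Tmap_inj e h0
    have hy0 : y = 0 := Prod.ext h1 hy
    rw [Submodule.mem_bot, hy0, map_zero]
  · -- C0 ⊓ g C1
    rw [eq_bot_iff]
    intro x hx
    rw [Submodule.mem_inf, Submodule.mem_map] at hx
    obtain ⟨h0, y, hy, rfl⟩ := hx
    rw [mem_C0] at h0
    rw [mem_C1] at hy
    rw [gmap_apply] at h0
    simp only [hy, map_zero, zero_add, smul_eq_zero] at h0
    have h1 : y.2 = 0 := by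
      rcases h0 with h0 | h0
      · exact absurd h0 two_ne_zero
      · exact h0
    have hy0 : y = 0 := Prod.ext hy h1
    rw [Submodule.mem_bot, hy0, map_zero]
  · -- C1 ⊓ g C0
    rw [eq_bot_iff]
    intro x hx
    rw [Submodule.mem_inf, Submodule.mem_map] at hx
    obtain ⟨h0, y, hy, rfl⟩ := hx
    rw [mem_C1] at h0
    rw [mem_C0] at hy
    rw [gmap_apply] at h0
    simp only [hy, map_zero, sub_zero] at h0
    have hy0 : y = 0 := Prod.ext h0 hy
    rw [Submodule.mem_bot, hy0, map_zero]
  · -- C1 ⊓ g C1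
    rw [eq_bot_iff]
    intro x hx
    rw [Submodule.mem_inf, Submodule.mem_map] at hx
    obtain ⟨h0, y, hy, rfl⟩ := hx
    rw [mem_C1] at h0 hy
    rw [gmap_apply] at h0
    simp only [hy, zero_sub, neg_eq_zero] at h0
    have h1 : y.2 = 0 := Tmap_inj e h0
    have hy0 : y = 0 := Prod.ext hy h1
    rw [Submodule.mem_bot, hy0, map_zero]
  · -- g C0 ⊓ g C1
    rw [eq_bot_iff]
    intro x hx
    rw [Submodule.mem_inf, Submodule.mem_map, Submodule.mem_map] at hx
    obtain ⟨⟨y, hy, hgy⟩, y', hy', hgy'⟩ := hx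
    rw [mem_C0] at hy
    rw [mem_C1] at hy'
    rw [gmap_apply] at hgy hgy'
    have hpq := hgy.trans hgy'.symm
    rw [Prod.mk.injEq] at hpq
    obtain ⟨e1, e2⟩ := hpq
    rw [hy, map_zero, sub_zero, hy', zero_sub] at e1
    rw [hy, hy', map_zero, smul_zero, add_zero, zero_add] at e2
    have h5 : Tmap e y.1 = y'.2 := by rw [e1, map_neg, Tmap_Tmap, neg_neg]
    have h3 : y'.2 = (2:ℂ) • y'.2 := h5.symm.trans e2
    have h2 : y'.2 = 0 := by
      rw [two_smul] at h3
      exact left_eq_add.mp h3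
    have hy0 : y' = 0 := Prod.ext hy' h2
    rw [Submodule.mem_bot, ← hgy', hy0]
    simp
end

section
/- Let n ≥ 1 be an integer and let V be an n-dimensional ℂ-linear subspace of ℂ^n × ℂ^n such that b vanishes identically on V × V and V ∩ C₀ = {0}. Then there exists a ℂ-linear automorphism g of ℂ^n × ℂ^n with det g = 1 and b(g(x), g(y)) = b(x,y) for all x, y, such that g(C₀) = C₀ and g(C₁) = V. -/
/-!
Since `V` meets `C₀` trivially and has dimension `n`, the second projection identifies `V` with
`ℂⁿ`, so `V` is the graph `{(B w, w)}` of a linear map `B`; isotropy of `V` says exactly that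
`B` is skew for the pairing `∑ zᵢ wᵢ`. The shear `(z, w) ↦ (z + B w, w)` then preserves `b`,
fixes `C₀` pointwise, acts trivially on the quotient by `C₀` (hence has determinant `1`), and
sends `C₁` to the graph of `B`.
-/

namespace LinearMap

theorem det_eq_one_of_sub_mem {K V : Type*} [Field K] [AddCommGroup V] [Module K V]
    [FiniteDimensional K V] (W : Submodule K V) (f : V →ₗ[K] V)
    (hW : ∀ x ∈ W, f x = x) (hquot : ∀ x, f x - x ∈ W) : f.det = 1 := by
  have hf : W ≤ W.comap f := fun x hx => by simpa [hW x hx] using hx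
  have hres : f.restrict hf = LinearMap.id := by
    ext x
    simp [restrict_apply, hW x x.2]
  have hmapQ : W.mapQ W f hf = LinearMap.id := by
    ext x
    simpa [Submodule.Quotient.eq] using hquot x
  rw [f.det_eq_det_mul_det W hf, hres, hmapQ, det_id, det_id, mul_one]

variable {K M N : Type*} [Field K] [AddCommGroup M] [Module K M] [AddCommGroup N] [Module K N]

theorem _root_.Submodule.exists_eq_range_prod_id_of_inf_range_inl_eq_bot [FiniteDimensional K N]
    (V : Submodule K (M × N)) (hdim : Module.finrank K V = Module.finrank K N)
    (hV : V ⊓ range (inl K M N) = ⊥) :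
    ∃ B : N →ₗ[K] M, V = range (B.prod LinearMap.id) := by
  have hinj : Function.Injective (snd K M N ∘ₗ V.subtype) := by
    rw [← ker_eq_bot, ker_comp, ← range_inl, ← Submodule.disjoint_iff_comap_eq_bot,
      disjoint_iff, hV]
  have : FiniteDimensional K V := Module.Finite.of_injective _ hinj
  let e : V ≃ₗ[K] N := linearEquivOfInjective _ hinj hdim
  refine ⟨fst K M N ∘ₗ V.subtype ∘ₗ e.symm.toLinearMap, ?_⟩
  have hgraph : (fst K M N ∘ₗ V.subtype ∘ₗ e.symm.toLinearMap).prod LinearMap.id =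
      V.subtype ∘ₗ e.symm.toLinearMap := by
    ext w : 1
    exact Prod.ext rfl (e.apply_symm_apply w).symm
  rw [hgraph, range_comp, LinearEquiv.range, Submodule.map_top, Submodule.range_subtype]

def shear (B : N →ₗ[K] M) : M × N →ₗ[K] M × N :=
  (fst K M N + B ∘ₗ snd K M N).prod (snd K M N)

@[simp]
theorem shear_apply (B : N →ₗ[K] M) (x : M × N) : shear B x = (x.1 + B x.2, x.2) := rfl

theorem shear_comp_inl (B : N →ₗ[K] M) : shear B ∘ₗ inl K M N = inl K M N := by
  ext <;> simp

theorem shear_comp_inr (B : N →ₗ[K] M) : shear B ∘ₗ inr K M N = B.prod LinearMap.id := by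
  ext <;> simp

theorem det_shear [FiniteDimensional K M] [FiniteDimensional K N] (B : N →ₗ[K] M) :
    (shear B).det = 1 := by
  refine det_eq_one_of_sub_mem (range (inl K M N)) _ ?_ ?_
  · rintro _ ⟨z, rfl⟩
    simp
  · intro x
    exact ⟨B x.2, by ext <;> simp⟩

end LinearMap

theorem hypForm_shear {n : ℕ} (B : (Fin n → ℂ) →ₗ[ℂ] (Fin n → ℂ))
    (x y : (Fin n → ℂ) × (Fin n → ℂ)) :
    hypForm n (B.shear x) (B.shear y) = hypForm n x y + hypForm n (B x.2, x.2) (B y.2, y.2) := by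
  simp only [hypForm, LinearMap.shear_apply, Pi.add_apply, ← Finset.sum_add_distrib]
  exact Finset.sum_congr rfl fun _ _ => by ring

theorem isotropic_complement_moved_general (n : ℕ)
    (V : Submodule ℂ ((Fin n → ℂ) × (Fin n → ℂ)))
    (hdim : Module.finrank ℂ V = n)
    (hiso : ∀ x ∈ V, ∀ y ∈ V, hypForm n x y = 0)
    (hcompl : V ⊓ hypC₀ n = ⊥) :
    ∃ g : ((Fin n → ℂ) × (Fin n → ℂ)) →ₗ[ℂ] ((Fin n → ℂ) × (Fin n → ℂ)),
      LinearMap.det g = 1 ∧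
      (∀ x y, hypForm n (g x) (g y) = hypForm n x y) ∧
      (hypC₀ n).map g = hypC₀ n ∧ (hypC₁ n).map g = V := by
  obtain ⟨B, rfl⟩ :=
    V.exists_eq_range_prod_id_of_inf_range_inl_eq_bot (by simpa using hdim) hcompl
  refine ⟨B.shear, B.det_shear, fun x y => ?_, ?_, ?_⟩
  · rw [hypForm_shear, add_eq_left]
    exact hiso _ ⟨x.2, rfl⟩ _ ⟨y.2, rfl⟩
  · rw [hypC₀, ← LinearMap.range_comp, LinearMap.shear_comp_inl]
  · rw [hypC₁, ← LinearMap.range_comp, LinearMap.shear_comp_inr]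

/-- Transitivity step of Section 4.3: for any `n`-dimensional isotropic subspace `V`
with `V ∩ C₀ = {0}` there is a linear automorphism `g` of `ℂ^n × ℂ^n` with `det g = 1`
preserving `b`, fixing `C₀` and mapping `C₁` onto `V`. -/
theorem isotropic_complement_moved (n : ℕ) (hn : 1 ≤ n)
    (V : Submodule ℂ ((Fin n → ℂ) × (Fin n → ℂ)))
    (hdim : Module.finrank ℂ V = n)
    (hiso : ∀ x ∈ V, ∀ y ∈ V, hypForm n x y = 0)
    (hcompl : V ⊓ hypC₀ n = ⊥) :
    ∃ g : ((Fin n → ℂ) × (Fin n → ℂ)) →ₗ[ℂ] ((Fin n → ℂ) × (Fin n → ℂ)),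
      LinearMap.det g = 1 ∧
      (∀ x y, hypForm n (g x) (g y) = hypForm n x y) ∧
      (hypC₀ n).map g = hypC₀ n ∧ (hypC₁ n).map g = V :=
  isotropic_complement_moved_general n V hdim hiso hcompl
end

section
/- Let n ≥ 1 be an integer. Then there exists a ℂ-linear automorphism g of ℂ × ℂ^n × ℂ^n with det g = 1 and B(g(x), g(y)) = B(x,y) for all x, y, such that the subspace W := H ∩ g(H), where H := {0} × ℂ^n × ℂ^n, satisfies dim W = 2n−1 and W ∩ W^⊥ = {0}, where W^⊥ = {x : B(x,w) = 0 for all w ∈ W}. -/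
/-- The symmetric bilinear form on `ℂ × ℂ^n × ℂ^n ≅ ℂ^{2n+1}`:
`B((u,z,w),(u',z',w')) = u·u' + ∑ᵢ (zᵢ w'ᵢ + wᵢ z'ᵢ)`, the polar form of
`q(u,z,w) = u² + 2⟨z,w⟩`. -/
noncomputable def oddForm (n : ℕ) (x y : ℂ × (Fin n → ℂ) × (Fin n → ℂ)) : ℂ :=
  x.1 * y.1 + ∑ i, (x.2.1 i * y.2.2 i + x.2.2 i * y.2.1 i)

/-- The hyperplane `H = {0} × ℂ^n × ℂ^n` of `ℂ × ℂ^n × ℂ^n`. -/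
noncomputable def oddH (n : ℕ) : Submodule ℂ (ℂ × (Fin n → ℂ) × (Fin n → ℂ)) :=
  Submodule.prod (⊥ : Submodule ℂ ℂ)
    (Submodule.prod (⊤ : Submodule ℂ (Fin n → ℂ)) (⊤ : Submodule ℂ (Fin n → ℂ)))

/-!
The hyperplane `H` is the orthogonal complement of the unit vector `e = (1, 0, 0)`, so for a
surjective isometry `g` we have `W = H ∩ g(H) = {e, g e}^⊥`. If `g e` is orthogonal to `e`, then
`e, g e` is an orthonormal pair spanning a nondegenerate plane, so `W` has codimension two and
`B` is nondegenerate on it. Such a `g` of determinant one is the product of the Eichler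
transvections `E(p, e)` and `E(q, e)`, where `p, q` are the isotropic basis vectors of one
hyperbolic plane `ℂ zᵢ ⊕ ℂ wᵢ`: it sends `e` to `-p - q/2`. Each Eichler transvection is a
product of two linear transvections, hence has determinant one.
-/

open Module LinearMap

namespace LinearMap.BilinForm

variable {K V : Type*} [Field K] [AddCommGroup V] [Module K V] {B : LinearMap.BilinForm K V}

variable (B) in
noncomputable def eichler (u w : V) : V →ₗ[K] V :=
  id + (B.flip u).smulRight w - (B.flip w).smulRight u - (B w w / 2) • (B.flip u).smulRight u

@[simp]
theorem eichler_apply (u w x : V) :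
    B.eichler u w x = x + B x u • w - B x w • u - (B w w / 2 * B x u) • u := by
  simp [eichler, mul_smul]

theorem eichler_eq_transvection_comp [NeZero (2 : K)] {u w : V} (huw : B u w = 0) :
    B.eichler u w =
      transvection (-B.flip w) u ∘ₗ transvection (B.flip u) (w + (B w w / 2) • u) := by
  ext x
  simp only [eichler_apply, coe_comp, Function.comp_apply, transvection.apply, flip_apply,
    smul_add, LinearMap.neg_apply, map_add, map_smul, huw]
  match_scalars <;> field_simp; ring

theorem det_eichler [FiniteDimensional K V] [NeZero (2 : K)] (hB : B.IsSymm) {u w : V}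
    (hu : B u u = 0) (huw : B u w = 0) : (B.eichler u w).det = 1 := by
  rw [eichler_eq_transvection_comp huw, det_comp, transvection.det, transvection.det]
  simp [hu, huw, hB.eq w u]

theorem eichler_isometry [NeZero (2 : K)] (hB : B.IsSymm) {u w : V} (hu : B u u = 0)
    (huw : B u w = 0) (x y : V) : B (B.eichler u w x) (B.eichler u w y) = B x y := by
  have hwu : B w u = 0 := by rw [hB.eq, huw]
  simp only [eichler_apply, map_add, map_sub, map_smul, LinearMap.add_apply, LinearMap.sub_apply,
    LinearMap.smul_apply, smul_eq_mul, hu, huw, hwu, hB.eq y u, hB.eq y w]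
  field_simp
  ring

theorem exists_det_eq_one_isometry_orthogonal_apply [FiniteDimensional K V] [NeZero (2 : K)]
    (hB : B.IsSymm) {e p q : V} (he : B e e = 1) (hep : B e p = 0) (heq : B e q = 0)
    (hp : B p p = 0) (hq : B q q = 0) (hpq : B p q = 1) :
    ∃ g : V →ₗ[K] V, g.det = 1 ∧ (∀ x y, B (g x) (g y) = B x y) ∧ B e (g e) = 0 := by
  have hpe : B p e = 0 := by rw [hB.eq, hep]
  have hqe : B q e = 0 := by rw [hB.eq, heq]
  refine ⟨B.eichler q e ∘ₗ B.eichler p e, ?_, fun x y ↦ ?_, ?_⟩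
  · rw [det_comp, det_eichler hB hq hqe, det_eichler hB hp hpe, one_mul]
  · rw [LinearMap.comp_apply, LinearMap.comp_apply, eichler_isometry hB hq hqe,
      eichler_isometry hB hp hpe]
  · simp [he, hep, heq, hpq]

theorem map_ker_flip_eq {g : V →ₗ[K] V} (hg : ∀ x y, B (g x) (g y) = B x y)
    (hsurj : Function.Surjective g) (e : V) :
    (ker (B.flip e)).map g = ker (B.flip (g e)) := by
  ext x
  obtain ⟨y, rfl⟩ := hsurj x
  simp only [Submodule.mem_map, mem_ker, flip_apply]
  constructor
  · rintro ⟨z, hz, hzy⟩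
    rw [← hzy, hg, hz]
  · intro hy
    exact ⟨y, by rwa [hg] at hy, rfl⟩

section OrthonormalPair

variable {e v : V} (hB : B.IsSymm) (he : B e e = 1) (hv : B v v = 1) (hev : B e v = 0)
include hB he hv hev

theorem surjective_flip_prod_flip : Function.Surjective ((B.flip e).prod (B.flip v)) := by
  intro c
  refine ⟨c.1 • e + c.2 • v, ?_⟩
  simp [he, hv, hev, hB.eq v e]

theorem finrank_ker_inf_ker_add_two [FiniteDimensional K V] :
    finrank K ↥(ker (B.flip e) ⊓ ker (B.flip v)) + 2 = finrank K V := by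
  have hrank := finrank_range_add_finrank_ker ((B.flip e).prod (B.flip v))
  rw [range_eq_top.mpr (surjective_flip_prod_flip hB he hv hev), finrank_top,
    finrank_prod, finrank_self, ker_prod] at hrank
  omega

theorem eq_zero_of_mem_ker_inf_ker_of_forall (hsep : B.SeparatingLeft) {x : V}
    (hx : x ∈ ker (B.flip e) ⊓ ker (B.flip v))
    (horth : ∀ w ∈ ker (B.flip e) ⊓ ker (B.flip v), B x w = 0) : x = 0 := by
  simp only [Submodule.mem_inf, mem_ker, flip_apply] at hx horth
  refine hsep x fun y ↦ ?_
  -- `y` minus its components along `e` and `v` is orthogonal to both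
  have hy := horth (y - B y e • e - B y v • v) (by simp [he, hv, hev, hB.eq v e])
  simpa [hx.1, hx.2] using hy

end OrthonormalPair

end LinearMap.BilinForm

section OddForm

variable (n : ℕ)

noncomputable def oddBilin : LinearMap.BilinForm ℂ (ℂ × (Fin n → ℂ) × (Fin n → ℂ)) :=
  LinearMap.mk₂ ℂ (oddForm n)
    (fun _ _ _ ↦ by
      simp only [oddForm, Prod.fst_add, Prod.snd_add, Pi.add_apply, add_mul,
        Finset.sum_add_distrib]
      ring)
    (fun _ _ _ ↦ by
      simp only [oddForm, Prod.smul_fst, Prod.smul_snd, Pi.smul_apply, smul_eq_mul, mul_add,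
        Finset.mul_sum]
      ring_nf)
    (fun _ _ _ ↦ by
      simp only [oddForm, Prod.fst_add, Prod.snd_add, Pi.add_apply, mul_add,
        Finset.sum_add_distrib]
      ring)
    (fun _ _ _ ↦ by
      simp only [oddForm, Prod.smul_fst, Prod.smul_snd, Pi.smul_apply, smul_eq_mul, mul_add,
        Finset.mul_sum]
      ring_nf)

variable {n}

@[simp]
theorem oddBilin_apply (x y : ℂ × (Fin n → ℂ) × (Fin n → ℂ)) :
    oddBilin n x y = oddForm n x y :=
  rfl

theorem isSymm_oddBilin : (oddBilin n).IsSymm := by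
  refine ⟨fun x y ↦ ?_⟩
  simp only [oddBilin_apply, oddForm, mul_comm x.1]
  exact congrArg _ (Finset.sum_congr rfl fun i _ ↦ by ring)

theorem separatingLeft_oddBilin : (oddBilin n).SeparatingLeft := by
  intro x hx
  have h1 := hx (1, 0, 0)
  have h2 i := hx (0, Pi.single i 1, 0)
  have h3 i := hx (0, 0, Pi.single i 1)
  simp [oddForm, Pi.single_apply] at h1 h2 h3
  exact Prod.ext h1 (Prod.ext (funext h3) (funext h2))

theorem oddH_eq_ker : oddH n = ker ((oddBilin n).flip (1, 0, 0)) := by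
  ext x
  simp [oddH, oddForm]

theorem finrank_oddSpace : finrank ℂ (ℂ × (Fin n → ℂ) × (Fin n → ℂ)) = 2 * n + 1 := by
  simp [finrank_prod]
  ring

theorem exists_det_eq_one_isometry_oddBilin_orthogonal_apply (i : Fin n) :
    ∃ g : (ℂ × (Fin n → ℂ) × (Fin n → ℂ)) →ₗ[ℂ] (ℂ × (Fin n → ℂ) × (Fin n → ℂ)),
      g.det = 1 ∧ (∀ x y, oddBilin n (g x) (g y) = oddBilin n x y) ∧
        oddBilin n (1, 0, 0) (g (1, 0, 0)) = 0 := by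
  apply (oddBilin n).exists_det_eq_one_isometry_orthogonal_apply isSymm_oddBilin
    (p := (0, Pi.single i 1, 0)) (q := (0, 0, Pi.single i 1)) <;> simp [oddForm, Pi.single_apply]

end OddForm

/-- Genericity claim of Section 4.4: there is a linear automorphism `g` of
`ℂ × ℂ^n × ℂ^n` with `det g = 1` preserving `B` such that `W := H ∩ g(H)` has dimension
`2n−1` and `W ∩ W^⊥ = {0}`. -/
theorem exists_generic_isometry (n : ℕ) (hn : 1 ≤ n) :
    ∃ g : (ℂ × (Fin n → ℂ) × (Fin n → ℂ)) →ₗ[ℂ] (ℂ × (Fin n → ℂ) × (Fin n → ℂ)),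
      LinearMap.det g = 1 ∧
      (∀ x y, oddForm n (g x) (g y) = oddForm n x y) ∧
      Module.finrank ℂ ↥(oddH n ⊓ (oddH n).map g) = 2*n - 1 ∧
      (∀ x ∈ oddH n ⊓ (oddH n).map g,
        (∀ w ∈ oddH n ⊓ (oddH n).map g, oddForm n x w = 0) → x = 0) := by
  obtain ⟨g, hdet, hg, hge⟩ :=
    exists_det_eq_one_isometry_oddBilin_orthogonal_apply (⟨0, hn⟩ : Fin n)
  set B := oddBilin n
  set e : ℂ × (Fin n → ℂ) × (Fin n → ℂ) := (1, 0, 0)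
  have he : B e e = 1 := by simp [B, e, oddForm]
  have hgg : B (g e) (g e) = 1 := by rw [hg, he]
  have hsurj : Function.Surjective g :=
    ((Module.End.isUnit_iff g).mp ((LinearMap.isUnit_iff_isUnit_det g).mpr (by simp [hdet]))).2
  have hW : oddH n ⊓ (oddH n).map g = ker (B.flip e) ⊓ ker (B.flip (g e)) := by
    rw [oddH_eq_ker, BilinForm.map_ker_flip_eq hg hsurj]
  refine ⟨g, hdet, hg, ?_, ?_⟩
  · have hrank := BilinForm.finrank_ker_inf_ker_add_two isSymm_oddBilin he hgg hge
    rw [finrank_oddSpace] at hrank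
    rw [hW, ← Nat.add_right_cancel_iff (n := 2), hrank]
    omega
  · rw [hW]
    exact fun x hx ↦ BilinForm.eq_zero_of_mem_ker_inf_ker_of_forall isSymm_oddBilin he hgg hge
      separatingLeft_oddBilin hx
end
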